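/- The functor Q : LT → SOp sending a Lawvere theory to its symmetric operad of operations is monadic: it has a left adjoint, reflects isomorphisms, and LT has and Q preserves coequalizers of Q-split pairs. -/

import Mathlib

/-- One step of the lexicographic decomposition of a sigma of `Fin`s. -/
def finSigmaSucc {k : ℕ} (ns : Fin (k + 1) → ℕ) :
    (Σ i : Fin (k + 1), Fin (ns i)) ≃ (Fin (ns 0) ⊕ Σ i : Fin k, Fin (ns i.succ)) where
  toFun p := Fin.cases (motive := fun i => Fin (ns i) → Fin (ns 0) ⊕ Σ i : Fin k, Fin (ns i.succ))
      (fun j => Sum.inl j) (fun i j => Sum.inr ⟨i, j⟩) p.1 p.2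
  invFun q := q.elim (fun j => ⟨0, j⟩) (fun q => ⟨q.1.succ, q.2⟩)
  left_inv := by rintro ⟨i, j⟩; induction i using Fin.cases <;> simp
  right_inv := by rintro (j | ⟨i, j⟩) <;> simp

/-- The lexicographic identification of `Σ i, Fin (ns i)` with `Fin (∑ i, ns i)`. -/
def finSigma : ∀ {k : ℕ} (ns : Fin k → ℕ), (Σ i : Fin k, Fin (ns i)) ≃ Fin (∑ i, ns i)
  | 0, ns => (Equiv.equivOfIsEmpty _ _ : (Σ i : Fin 0, Fin (ns i)) ≃ Fin 0).trans
      (finCongr (by simp))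
  | k + 1, ns =>
    (finSigmaSucc ns).trans <|
      ((Equiv.refl (Fin (ns 0))).sumCongr (finSigma fun i => ns i.succ)).trans <|
        finSumFinEquiv.trans (finCongr (Fin.sum_univ_succ ns).symm)

/-- Operadic composition of permutations: on the lexicographic block decomposition,
`⟨i, r⟩ ↦ ⟨τ i, σs (τ i) r⟩`. -/
def symComp {k : ℕ} (ns : Fin k → ℕ) (σs : ∀ i, Equiv.Perm (Fin (ns i)))
    (τ : Equiv.Perm (Fin k)) : Equiv.Perm (Fin (∑ i, ns i)) :=
  (finCongr (Equiv.sum_comp τ ns)).symm.trans <|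
    ((finSigma fun i => ns (τ i)).symm.trans
      ((Equiv.sigmaCongr τ fun i => σs (τ i)).trans (finSigma ns)))

/-- A symmetric operad. -/
structure SymOperad where
  ops : ℕ → Type
  unit : ops 1
  comp : ∀ {k : ℕ} (ns : Fin k → ℕ), (∀ i, ops (ns i)) → ops k → ops (∑ i, ns i)
  act : ∀ {n : ℕ}, Equiv.Perm (Fin n) → ops n → ops n
  act_one : ∀ {n : ℕ} (x : ops n), act (Equiv.refl (Fin n)) x = x
  act_mul : ∀ {n : ℕ} (σ τ : Equiv.Perm (Fin n)) (x : ops n),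
    act (σ * τ) x = act σ (act τ x)
  comp_unit_left : ∀ {n : ℕ} (g : ops n),
    HEq (comp (fun _ : Fin n => 1) (fun _ => unit) g) g
  comp_unit_right : ∀ {n : ℕ} (g : ops n),
    HEq (comp (fun _ : Fin 1 => n) (fun _ => g) unit) g
  comp_assoc : ∀ {k : ℕ} (ns : Fin k → ℕ) (ms : ∀ i, Fin (ns i) → ℕ)
    (hs : ∀ i j, ops (ms i j)) (gs : ∀ i, ops (ns i)) (f : ops k),
    HEq (comp (fun p => ms ((finSigma ns).symm p).1 ((finSigma ns).symm p).2)
          (fun p => hs ((finSigma ns).symm p).1 ((finSigma ns).symm p).2)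
          (comp ns gs f))
        (comp (fun i => ∑ j, ms i j) (fun i => comp (ms i) (hs i) (gs i)) f)
  equiv_inner : ∀ {k : ℕ} (ns : Fin k → ℕ) (σs : ∀ i, Equiv.Perm (Fin (ns i)))
    (gs : ∀ i, ops (ns i)) (f : ops k),
    comp ns (fun i => act (σs i) (gs i)) f
      = act (symComp ns σs (Equiv.refl (Fin k))) (comp ns gs f)
  equiv_outer : ∀ {k : ℕ} (ns : Fin k → ℕ) (τ : Equiv.Perm (Fin k))
    (gs : ∀ i, ops (ns i)) (f : ops k),
    HEq (comp (fun i => ns (τ i)) (fun i => gs (τ i)) (act τ f))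
        (act (symComp ns (fun i => Equiv.refl (Fin (ns i))) τ) (comp ns gs f))

/-- Composition `a ∗ b` of unary operations of an operad. -/
def SymOperad.comp1 (O : SymOperad) (a b : O.ops 1) : O.ops 1 :=
  cast (congrArg O.ops (by simp)) (O.comp (fun _ : Fin 1 => 1) (fun _ => a) b)

/-- Composition `⟨c 1, …, c r⟩ ∗ h` of an `r`-ary operation with unary operations. -/
def SymOperad.unaryComp (O : SymOperad) {r : ℕ} (c : Fin r → O.ops 1) (h : O.ops r) :
    O.ops r :=
  cast (congrArg O.ops (by simp)) (O.comp (fun _ : Fin r => 1) c h)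
/-- A Lawvere theory: a category with objects the natural numbers where `n` is the
`n`-fold power of `1` with chosen projections.  `comp f g` is `f` followed by `g`. -/
structure LawTheory where
  Hom : ℕ → ℕ → Type
  id : ∀ n : ℕ, Hom n n
  comp : ∀ {a b c : ℕ}, Hom a b → Hom b c → Hom a c
  id_comp : ∀ {a b : ℕ} (f : Hom a b), comp (id a) f = f
  comp_id : ∀ {a b : ℕ} (f : Hom a b), comp f (id b) = f
  assoc : ∀ {a b c d : ℕ} (f : Hom a b) (g : Hom b c) (h : Hom c d),
    comp (comp f g) h = comp f (comp g h)
  proj : ∀ (n : ℕ), Fin n → Hom n 1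
  tuple : ∀ {a n : ℕ}, (Fin n → Hom a 1) → Hom a n
  tuple_proj : ∀ {a n : ℕ} (fs : Fin n → Hom a 1) (i : Fin n),
    comp (tuple fs) (proj n i) = fs i
  tuple_eta : ∀ {a n : ℕ} (g : Hom a n),
    tuple (fun i => comp g (proj n i)) = g

namespace LawTheory

variable (T : LawTheory)

/-- The structural morphism `π_φ : n → m` induced by a function `φ : (m] → (n]`. -/
def pi {n m : ℕ} (φ : Fin m → Fin n) : T.Hom n m :=
  T.tuple fun i => T.proj n (φ i)

/-- The product map `f₁ × ⋯ × f_k : ∑ ns i → k` of operations `fs i : ns i → 1`,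
formed via the chosen projections and the lexicographic block decomposition. -/
def prodMap {k : ℕ} (ns : Fin k → ℕ) (fs : ∀ i, T.Hom (ns i) 1) :
    T.Hom (∑ i, ns i) k :=
  T.tuple fun i => T.comp (T.pi fun j : Fin (ns i) => finSigma ns ⟨i, j⟩) (fs i)

/-- Operadic composition of the operations of a Lawvere theory:
`⟨f₁,…,f_k⟩ ∗ f = f ∘ (f₁ × ⋯ × f_k)`. -/
def opComp {k : ℕ} (ns : Fin k → ℕ) (fs : ∀ i, T.Hom (ns i) 1) (f : T.Hom k 1) :
    T.Hom (∑ i, ns i) 1 :=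
  T.comp (T.prodMap ns fs) f

/-- The action `σ · f = f ∘ π_σ` of a permutation on an operation. -/
def opAct {n : ℕ} (σ : Equiv.Perm (Fin n)) (f : T.Hom n 1) : T.Hom n 1 :=
  T.comp (T.pi ⇑σ) f

/-- A morphism `f : a → b` is invertible (an isomorphism). -/
def IsInvertible {a b : ℕ} (f : T.Hom a b) : Prop :=
  ∃ g : T.Hom b a, T.comp f g = T.id a ∧ T.comp g f = T.id b

/-- Structural morphisms: the closure under isomorphism of the image of the unique
interpretation from the initial Lawvere theory `𝔽ᵒᵖ`. -/
def Structural {n m : ℕ} (f : T.Hom n m) : Prop :=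
  ∃ (φ : Fin m → Fin n) (u : T.Hom n n) (v : T.Hom m m),
    T.IsInvertible u ∧ T.IsInvertible v ∧ f = T.comp u (T.comp (T.pi φ) v)

/-- `e` is left orthogonal to `m`: unique diagonal fillers exist. -/
def Orthogonal {a b c d : ℕ} (e : T.Hom a b) (m : T.Hom c d) : Prop :=
  ∀ (u : T.Hom a c) (v : T.Hom b d), T.comp u m = T.comp e v →
    ∃! w : T.Hom b c, T.comp e w = u ∧ T.comp w m = v

/-- Analytic morphisms: those right orthogonal to all structural morphisms. -/
def Analytic {c d : ℕ} (f : T.Hom c d) : Prop :=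
  ∀ {a b : ℕ} (e : T.Hom a b), T.Structural e → T.Orthogonal e f

/-- The canonical map `ρ_n : S_n × Aut(1)ⁿ → Hom(n,n)`,
`(σ, a) ↦ (a₁ × ⋯ × a_n) ∘ π_σ`. -/
def rho (n : ℕ)
    (p : Equiv.Perm (Fin n) × (Fin n → {f : T.Hom 1 1 // T.IsInvertible f})) :
    T.Hom n n :=
  T.comp (T.pi ⇑p.1) (T.tuple fun i => T.comp (T.proj n i) (p.2 i).1)

/-- `T` has simple automorphisms: each `ρ_n` is a bijection onto the automorphisms. -/
def HasSimpleAut : Prop :=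
  ∀ n : ℕ, Function.Injective (T.rho n) ∧
    Set.range (T.rho n) = {f : T.Hom n n | T.IsInvertible f}

/-- `T` is an analytic Lawvere theory: structural and analytic morphisms form a
factorization system and `T` has simple automorphisms. -/
def IsAnalyticTheory : Prop :=
  (∀ {n m : ℕ} (f : T.Hom n m), ∃ (k : ℕ) (e : T.Hom n k) (g : T.Hom k m),
      T.Structural e ∧ T.Analytic g ∧ f = T.comp e g) ∧ T.HasSimpleAut

end LawTheory

/-- A morphism of symmetric operads. -/
structure OperadHom (O O' : SymOperad) where
  map : ∀ n : ℕ, O.ops n → O'.ops n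
  map_unit : map 1 O.unit = O'.unit
  map_comp : ∀ {k : ℕ} (ns : Fin k → ℕ) (gs : ∀ i, O.ops (ns i)) (f : O.ops k),
    map _ (O.comp ns gs f) = O'.comp ns (fun i => map _ (gs i)) (map k f)
  map_act : ∀ {n : ℕ} (σ : Equiv.Perm (Fin n)) (x : O.ops n),
    map n (O.act σ x) = O'.act σ (map n x)

/-- An interpretation of Lawvere theories: an identity-on-objects functor
preserving the chosen projections. -/
structure LawHom (T T' : LawTheory) where
  map : ∀ {a b : ℕ}, T.Hom a b → T'.Hom a b
  map_id : ∀ n : ℕ, map (T.id n) = T'.id n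
  map_comp : ∀ {a b c : ℕ} (f : T.Hom a b) (g : T.Hom b c),
    map (T.comp f g) = T'.comp (map f) (map g)
  map_proj : ∀ (n : ℕ) (i : Fin n), map (T.proj n i) = T'.proj n i

/-- `S` is the symmetric operad of operations of the Lawvere theory `T`. -/
def IsOperadOf (T : LawTheory) (S : SymOperad) : Prop :=
  S.ops = (fun n => T.Hom n 1) ∧ HEq S.unit (T.id 1) ∧
    HEq (@SymOperad.comp S) (@LawTheory.opComp T) ∧
    HEq (@SymOperad.act S) (@LawTheory.opAct T)
/-- A family of maps `O_n → T(n,1)` which is a morphism of symmetric operads from `O`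
to the operad of operations `Q(T)` of the Lawvere theory `T`. -/
def IsOperadMapToQ (O : SymOperad) (T : LawTheory)
    (h : ∀ n : ℕ, O.ops n → T.Hom n 1) : Prop :=
  h 1 O.unit = T.id 1 ∧
  (∀ {k : ℕ} (ns : Fin k → ℕ) (gs : ∀ i, O.ops (ns i)) (f : O.ops k),
    h _ (O.comp ns gs f) = T.opComp ns (fun i => h _ (gs i)) (h k f)) ∧
  (∀ {n : ℕ} (σ : Equiv.Perm (Fin n)) (g : O.ops n),
    h n (O.act σ g) = T.opAct σ (h n g))

/-- A family of maps `T(n,1) → O_n` which is a morphism of symmetric operads from the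
operad of operations `Q(T)` of the Lawvere theory `T` to `O`. -/
def IsQOperadHom (T : LawTheory) (O : SymOperad)
    (q : ∀ n : ℕ, T.Hom n 1 → O.ops n) : Prop :=
  q 1 (T.id 1) = O.unit ∧
  (∀ {k : ℕ} (ns : Fin k → ℕ) (fs : ∀ i, T.Hom (ns i) 1) (f : T.Hom k 1),
    q _ (T.opComp ns fs f) = O.comp ns (fun i => q _ (fs i)) (q k f)) ∧
  (∀ {n : ℕ} (σ : Equiv.Perm (Fin n)) (f : T.Hom n 1),
    q n (T.opAct σ f) = O.act σ (q n f))

/-!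
Since `T(a, b) = T(a, 1)ᵇ`, an interpretation is determined by its action on the operations
`T(n, 1)`. Hence a map that is bijective on operations is bijective on all hom-sets and so an
isomorphism, and an operad map into `Q(T)` extends in at most one way to an interpretation.

The left adjoint is a term model: its operations `a → 1` are the terms in `a` variables built
from the operations of `O`, two terms being identified when they evaluate equally along every
operad map `O → Q(T)` into every Lawvere theory. Substitution makes these a Lawvere theory, and
evaluation gives the extension of an operad map.

For a `Q`-split pair `F, F' : T' ⇉ T` with coequalizer `q : Q(T) → O` and sections `s`, `t`,
the coequalizer in `LT` has hom-sets `O(a)ᵇ`, composed by lifting along `s`, composing in `T`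
and projecting along `q`. This is well defined because `q` forgets the difference between
`F w` and `F' w`: lifting `x` to `x' = ⟨t (πᵢ ∘ x)⟩ᵢ` gives `F x' = x` and
`F' x' = ⟨s (q (πᵢ ∘ x))⟩ᵢ`, so `q (y ∘ x)` only depends on `q y` and on the components
`q (πᵢ ∘ x)` of `x`.
-/

namespace LawTheory

variable {T : LawTheory}

theorem hom_ext {a n : ℕ} {g g' : T.Hom a n}
    (h : ∀ i, T.comp g (T.proj n i) = T.comp g' (T.proj n i)) : g = g' := by
  rw [← T.tuple_eta g, ← T.tuple_eta g']
  exact congrArg T.tuple (funext h)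

theorem comp_tuple {a b n : ℕ} (x : T.Hom a b) (fs : Fin n → T.Hom b 1) :
    T.comp x (T.tuple fs) = T.tuple fun i => T.comp x (fs i) :=
  hom_ext fun i => by rw [T.assoc, T.tuple_proj, T.tuple_proj]

theorem tuple_proj_eq_id (n : ℕ) : T.tuple (T.proj n) = T.id n := by
  simpa only [T.id_comp] using T.tuple_eta (T.id n)

theorem tuple_fin_one_eq {a : ℕ} (hp : T.proj 1 0 = T.id 1) (f : T.Hom a 1) :
    T.tuple (fun _ : Fin 1 => f) = f :=
  hom_ext fun i => by rw [Subsingleton.elim i 0, T.tuple_proj, hp, T.comp_id]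

theorem proj_one_eq_id_of_tuple_tuple
    (h : T.tuple (fun _ : Fin 1 => T.tuple fun _ : Fin 1 => T.proj 1 0) = T.id 1) :
    T.proj 1 0 = T.id 1 := by
  have hP : T.tuple (fun _ : Fin 1 => T.proj 1 0) = T.id 1 := by
    rw [← tuple_proj_eq_id]
    exact congrArg T.tuple (funext fun i => by rw [Subsingleton.elim i 0])
  rw [hP] at h
  simpa only [T.tuple_proj, h, T.id_comp] using T.tuple_proj (fun _ : Fin 1 => T.id 1) 0

end LawTheory

namespace LawHom

variable {T T' : LawTheory} (F : LawHom T T')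

theorem ext {G : LawHom T T'} (h : ∀ (a b : ℕ) (f : T.Hom a b), F.map f = G.map f) :
    F = G := by
  obtain ⟨m, _, _, _⟩ := F
  obtain ⟨m', _, _, _⟩ := G
  obtain rfl : @m = @m' := by funext a b f; exact h a b f
  rfl

theorem map_tuple {a n : ℕ} (fs : Fin n → T.Hom a 1) :
    F.map (T.tuple fs) = T'.tuple fun i => F.map (fs i) :=
  LawTheory.hom_ext fun i => by rw [T'.tuple_proj, ← F.map_proj, ← F.map_comp, T.tuple_proj]

theorem map_pi {n m : ℕ} (φ : Fin m → Fin n) : F.map (T.pi φ) = T'.pi φ := by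
  simp only [LawTheory.pi, map_tuple, F.map_proj]

theorem map_opComp {k : ℕ} (ns : Fin k → ℕ) (fs : ∀ i, T.Hom (ns i) 1) (f : T.Hom k 1) :
    F.map (T.opComp ns fs f) = T'.opComp ns (fun i => F.map (fs i)) (F.map f) := by
  simp only [LawTheory.opComp, LawTheory.prodMap, F.map_comp, map_tuple, map_pi]

theorem map_opAct {n : ℕ} (σ : Equiv.Perm (Fin n)) (f : T.Hom n 1) :
    F.map (T.opAct σ f) = T'.opAct σ (F.map f) := by
  simp only [LawTheory.opAct, F.map_comp, map_pi]

theorem ext_of_unary {G : LawHom T T'} (h : ∀ (a : ℕ) (f : T.Hom a 1), F.map f = G.map f) :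
    F = G :=
  ext F fun a b f => by rw [← T.tuple_eta f, map_tuple, map_tuple]; simp only [h]

end LawHom

theorem IsOperadMapToQ.proj_one_eq_id {O : SymOperad} {T : LawTheory}
    {h : ∀ n : ℕ, O.ops n → T.Hom n 1} (H : IsOperadMapToQ O T h) : T.proj 1 0 = T.id 1 := by
  obtain ⟨h_unit, h_comp, -⟩ := H
  have hcomp : T.opComp (fun _ : Fin 1 => 1) (fun _ => T.id 1) (T.id 1) = T.id 1 := by
    rw [← h_unit, ← h_comp, eq_of_heq (O.comp_unit_right O.unit)]
    -- `∑ i : Fin 1, 1` reduces to `1` by `rfl`, which also makes the `eq_of_heq` above typecheck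
    rfl
  apply LawTheory.proj_one_eq_id_of_tuple_tuple
  have h0 : ∀ p, finSigma (fun _ : Fin 1 => 1) p = (0 : Fin 1) :=
    fun _ => Subsingleton.elim (α := Fin 1) _ _
  simp only [LawTheory.opComp, LawTheory.prodMap, LawTheory.pi, T.comp_id, h0] at hcomp
  exact hcomp

namespace SymOperad

inductive Term (O : SymOperad) (n : ℕ) : Type
  | var (i : Fin n) : Term O n
  | op {k : ℕ} (x : O.ops k) (args : Fin k → Term O n) : Term O n

namespace Term

variable {O : SymOperad}

def subst {a b : ℕ} (f : Fin b → Term O a) : Term O b → Term O a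
  | var i => f i
  | op x args => op x fun i => subst f (args i)

def eval (T : LawTheory) (h : ∀ m : ℕ, O.ops m → T.Hom m 1) {n : ℕ} : Term O n → T.Hom n 1
  | var i => T.proj n i
  | op x args => T.comp (T.tuple fun i => eval T h (args i)) (h _ x)

theorem eval_subst (T : LawTheory) (h : ∀ m : ℕ, O.ops m → T.Hom m 1) {a b : ℕ}
    (f : Fin b → Term O a) (t : Term O b) :
    eval T h (subst f t) = T.comp (T.tuple fun i => eval T h (f i)) (eval T h t) := by
  induction t with
  | var i => simp only [subst, eval, T.tuple_proj]
  | op x args ih => simp only [subst, eval, ih, ← T.assoc, LawTheory.comp_tuple]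

theorem eval_op_var (T : LawTheory) (h : ∀ m : ℕ, O.ops m → T.Hom m 1) {n : ℕ}
    (g : O.ops n) : eval T h (op g var) = h n g := by
  simp only [eval, LawTheory.tuple_proj_eq_id, T.id_comp]

instance setoid (O : SymOperad) (n : ℕ) : Setoid (Term O n) where
  r t t' := ∀ (T : LawTheory) (h : ∀ m : ℕ, O.ops m → T.Hom m 1),
    IsOperadMapToQ O T h → eval T h t = eval T h t'
  iseqv := ⟨fun _ _ _ _ => rfl, fun e T h H => (e T h H).symm,
    fun e e' T h H => (e T h H).trans (e' T h H)⟩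

end Term

abbrev FreeOp (O : SymOperad) (n : ℕ) : Type := Quotient (Term.setoid O n)

namespace FreeOp

variable {O : SymOperad} {T : LawTheory} {h : ∀ m : ℕ, O.ops m → T.Hom m 1}

def eval (H : IsOperadMapToQ O T h) {n : ℕ} : FreeOp O n → T.Hom n 1 :=
  Quotient.lift (Term.eval T h) fun _ _ e => e T h H

theorem eval_mk (H : IsOperadMapToQ O T h) {n : ℕ} (t : Term O n) :
    eval H ⟦t⟧ = Term.eval T h t := rfl

theorem ext {n : ℕ} {x y : FreeOp O n}
    (e : ∀ (T : LawTheory) (h : ∀ m : ℕ, O.ops m → T.Hom m 1) (H : IsOperadMapToQ O T h),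
      eval H x = eval H y) : x = y := by
  induction x using Quotient.ind
  induction y using Quotient.ind
  exact Quotient.sound fun T h H => e T h H

theorem term_eval_out (H : IsOperadMapToQ O T h) {n : ℕ} (x : FreeOp O n) :
    Term.eval T h x.out = eval H x := by
  conv_rhs => rw [← Quotient.out_eq x]
  rfl

noncomputable def subst {a b : ℕ} (X : Fin b → FreeOp O a) (y : FreeOp O b) : FreeOp O a :=
  ⟦y.out.subst fun i => (X i).out⟧

theorem eval_subst (H : IsOperadMapToQ O T h) {a b : ℕ} (X : Fin b → FreeOp O a)
    (y : FreeOp O b) :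
    eval H (subst X y) = T.comp (T.tuple fun i => eval H (X i)) (eval H y) := by
  simp only [subst, eval_mk, Term.eval_subst, term_eval_out H]

theorem eval_var (H : IsOperadMapToQ O T h) {n : ℕ} (i : Fin n) :
    eval H ⟦Term.var i⟧ = T.proj n i := rfl

theorem eval_op_var (H : IsOperadMapToQ O T h) {n : ℕ} (g : O.ops n) :
    eval H ⟦Term.op g Term.var⟧ = h n g :=
  Term.eval_op_var T h g

end FreeOp

open FreeOp in
noncomputable abbrev freeTheory (O : SymOperad) : LawTheory where
  Hom a b := Fin b → FreeOp O a
  id _ i := ⟦Term.var i⟧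
  comp X Y j := subst X (Y j)
  proj _ i _ := ⟦Term.var i⟧
  tuple fs i := fs i 0
  id_comp f := funext fun j => FreeOp.ext fun T h H => by
    simp only [eval_subst, eval_var, LawTheory.tuple_proj_eq_id, T.id_comp]
  comp_id f := funext fun j => FreeOp.ext fun T h H => by
    simp only [eval_subst, eval_var, T.tuple_proj]
  assoc f g k := funext fun j => FreeOp.ext fun T h H => by
    simp only [eval_subst, ← LawTheory.comp_tuple, T.assoc]
  tuple_proj fs i := funext fun j => FreeOp.ext fun T h H => by
    simp only [eval_subst, eval_var, T.tuple_proj, Subsingleton.elim j 0]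
  tuple_eta g := funext fun i => FreeOp.ext fun T h H => by
    simp only [eval_subst, eval_var, T.tuple_proj]

def freeUnit (O : SymOperad) (n : ℕ) (g : O.ops n) : (freeTheory O).Hom n 1 :=
  fun _ => ⟦Term.op g Term.var⟧

section FreeLift

variable {O : SymOperad} {T : LawTheory} {h : ∀ m : ℕ, O.ops m → T.Hom m 1}

open FreeOp in
noncomputable def freeLift (H : IsOperadMapToQ O T h) : LawHom (freeTheory O) T where
  map f := T.tuple fun i => eval H (f i)
  map_id n := LawTheory.tuple_proj_eq_id n
  map_comp f g := by
    rw [LawTheory.comp_tuple]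
    exact congrArg T.tuple (funext fun j => eval_subst H f (g j))
  map_proj n i := LawTheory.tuple_fin_one_eq H.proj_one_eq_id _

theorem freeLift_map_unary (H : IsOperadMapToQ O T h) {n : ℕ} (x : (freeTheory O).Hom n 1) :
    (freeLift H).map x = FreeOp.eval H (x 0) := by
  simp only [freeLift, Subsingleton.elim _ (0 : Fin 1)]
  exact LawTheory.tuple_fin_one_eq H.proj_one_eq_id _

theorem freeLift_freeUnit (H : IsOperadMapToQ O T h) {n : ℕ} (g : O.ops n) :
    (freeLift H).map (freeUnit O n g) = h n g := by
  rw [freeLift_map_unary, freeUnit, FreeOp.eval_op_var]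

theorem freeTheory_unary_ext {n : ℕ} {x y : (freeTheory O).Hom n 1}
    (e : ∀ (T : LawTheory) (h : ∀ m : ℕ, O.ops m → T.Hom m 1) (H : IsOperadMapToQ O T h),
      (freeLift H).map x = (freeLift H).map y) : x = y :=
  funext fun i => FreeOp.ext fun T h H => by
    simpa only [freeLift_map_unary, Subsingleton.elim i 0] using e T h H

end FreeLift

theorem isOperadMapToQ_freeUnit (O : SymOperad) :
    IsOperadMapToQ O (freeTheory O) (freeUnit O) := by
  refine ⟨?_, fun ns gs f => ?_, fun σ g => ?_⟩ <;> refine freeTheory_unary_ext fun T h H => ?_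
  · rw [freeLift_freeUnit, H.1, LawHom.map_id]
  · simp only [freeLift_freeUnit, H.2.1, LawHom.map_opComp]
  · simp only [freeLift_freeUnit, H.2.2, LawHom.map_opAct]

theorem freeTheory_op_eq_comp {O : SymOperad} {n k : ℕ} (x : O.ops k)
    (args : Fin k → Term O n) :
    (fun _ => ⟦Term.op x args⟧ : (freeTheory O).Hom n 1) =
      (freeTheory O).comp ((freeTheory O).tuple fun r _ => ⟦args r⟧) (freeUnit O k x) :=
  funext fun _ => FreeOp.ext fun T h H => by
    simp only [freeUnit, FreeOp.eval_subst, FreeOp.eval_mk, Term.eval_op_var]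
    rfl

theorem _root_.LawHom.map_freeTheory_mk {O : SymOperad} {T : LawTheory}
    {h : ∀ m : ℕ, O.ops m → T.Hom m 1} (F : LawHom (freeTheory O) T)
    (hF : ∀ (n : ℕ) (g : O.ops n), F.map (freeUnit O n g) = h n g) {n : ℕ} (t : Term O n) :
    F.map (fun _ => ⟦t⟧) = Term.eval T h t := by
  induction t with
  | var i => exact F.map_proj n i
  | op x args ih =>
    rw [freeTheory_op_eq_comp, F.map_comp, LawHom.map_tuple, hF]
    simp only [freeTheory, ih, Term.eval]

theorem freeLift_unique {O : SymOperad} {T : LawTheory} {h : ∀ m : ℕ, O.ops m → T.Hom m 1}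
    (H : IsOperadMapToQ O T h) (F : LawHom (freeTheory O) T)
    (hF : ∀ (n : ℕ) (g : O.ops n), F.map (freeUnit O n g) = h n g) : F = freeLift H :=
  F.ext_of_unary fun a x => by
    have hx : x = fun _ => ⟦(x 0).out⟧ := funext fun i => by
      rw [Subsingleton.elim i 0, Quotient.out_eq]
    rw [hx, F.map_freeTheory_mk hF, freeLift_map_unary, FreeOp.eval_mk]

theorem exists_universal_operadMapToQ (O : SymOperad) :
    ∃ (T : LawTheory) (η : ∀ n : ℕ, O.ops n → T.Hom n 1), IsOperadMapToQ O T η ∧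
      ∀ (T' : LawTheory) (h : ∀ n : ℕ, O.ops n → T'.Hom n 1), IsOperadMapToQ O T' h →
        ∃! F : LawHom T T', ∀ (n : ℕ) (g : O.ops n), F.map (η n g) = h n g :=
  ⟨freeTheory O, freeUnit O, isOperadMapToQ_freeUnit O, fun _ _ H =>
    ⟨freeLift H, fun _ => freeLift_freeUnit H, fun F hF => freeLift_unique H F hF⟩⟩

end SymOperad

namespace LawHom

variable {T T' : LawTheory} (F : LawHom T T')

theorem bijective_map_of_bijective_unary (hF : ∀ n, Function.Bijective (@F.map n 1))
    (a b : ℕ) : Function.Bijective (@F.map a b) := by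
  refine ⟨fun f f' e => LawTheory.hom_ext fun i => (hF a).injective ?_, fun g => ?_⟩
  · rw [F.map_comp, F.map_comp, e]
  · choose f hf using fun i => (hF a).surjective (T'.comp g (T'.proj b i))
    exact ⟨T.tuple f, by rw [map_tuple]; simp only [hf, T'.tuple_eta]⟩

noncomputable def inverse (hF : ∀ a b, Function.Bijective (@F.map a b)) : LawHom T' T where
  map g := (Equiv.ofBijective _ (hF _ _)).symm g
  map_id n := by
    rw [Equiv.symm_apply_eq, Equiv.ofBijective_apply, F.map_id]
  map_comp f g := by
    rw [Equiv.symm_apply_eq, Equiv.ofBijective_apply, F.map_comp]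
    simp only [Equiv.ofBijective_apply_symm_apply]
  map_proj n i := by
    rw [Equiv.symm_apply_eq, Equiv.ofBijective_apply, F.map_proj]

theorem inverse_map_map (hF : ∀ a b, Function.Bijective (@F.map a b)) {a b : ℕ}
    (f : T.Hom a b) : (F.inverse hF).map (F.map f) = f :=
  Equiv.ofBijective_symm_apply_apply _ (hF a b) f

theorem map_inverse_map (hF : ∀ a b, Function.Bijective (@F.map a b)) {a b : ℕ}
    (g : T'.Hom a b) : F.map ((F.inverse hF).map g) = g :=
  Equiv.ofBijective_apply_symm_apply _ (hF a b) g

end LawHom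

namespace LawTheory

variable (T : LawTheory) {X : ℕ → Type}

def components (q : ∀ n, T.Hom n 1 → X n) {a b : ℕ} (x : T.Hom a b) : Fin b → X a :=
  fun i => q a (T.comp x (T.proj b i))

def tupleOf (s : ∀ n, X n → T.Hom n 1) {a b : ℕ} (α : Fin b → X a) : T.Hom a b :=
  T.tuple fun i => s a (α i)

variable {T}

theorem tupleOf_comp_proj (s : ∀ n, X n → T.Hom n 1) {a b : ℕ} (α : Fin b → X a)
    (i : Fin b) :
    T.comp (T.tupleOf s α) (T.proj b i) = s a (α i) :=
  T.tuple_proj _ i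

theorem components_tuple (q : ∀ n, T.Hom n 1 → X n) {a n : ℕ} (fs : Fin n → T.Hom a 1) :
    T.components q (T.tuple fs) = fun i => q a (fs i) :=
  funext fun i => by rw [components, T.tuple_proj]

end LawTheory

/-- On unary hom-sets `T(n, 1)`, `q` is a split coequalizer of `F` and `F'` with sections
`s` and `t`. -/
structure IsSplitOnUnary {T' T : LawTheory} {X : ℕ → Type} (F F' : LawHom T' T)
    (q : ∀ n, T.Hom n 1 → X n) (s : ∀ n, X n → T.Hom n 1)
    (t : ∀ n, T.Hom n 1 → T'.Hom n 1) : Prop where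
  condition : ∀ n (x : T'.Hom n 1), q n (F.map x) = q n (F'.map x)
  q_s : ∀ n (y : X n), q n (s n y) = y
  map_t : ∀ n (b : T.Hom n 1), F.map (t n b) = b
  map'_t : ∀ n (b : T.Hom n 1), F'.map (t n b) = s n (q n b)

namespace IsSplitOnUnary

variable {T' T : LawTheory} {X : ℕ → Type} {F F' : LawHom T' T} {q : ∀ n, T.Hom n 1 → X n}
  {s : ∀ n, X n → T.Hom n 1} {t : ∀ n, T.Hom n 1 → T'.Hom n 1}

theorem q_comp_eq (H : IsSplitOnUnary F F' q s t) {a b : ℕ} (x : T'.Hom a b) (y : T.Hom b 1) :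
    q a (T.comp (F.map x) y) = q a (T.comp (F'.map x) (s b (q b y))) := by
  have := H.condition a (T'.comp x (t b y))
  rwa [F.map_comp, F'.map_comp, H.map_t, H.map'_t] at this

theorem exists_lift (H : IsSplitOnUnary F F' q s t) {a b : ℕ} (x : T.Hom a b) :
    ∃ x' : T'.Hom a b, F.map x' = x ∧ F'.map x' = T.tupleOf s (T.components q x) :=
  ⟨T'.tuple fun i => t a (T.comp x (T.proj b i)), by
    simp only [LawHom.map_tuple, H.map_t, T.tuple_eta], by
    simp only [LawHom.map_tuple, H.map'_t]; rfl⟩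

theorem components_tupleOf (H : IsSplitOnUnary F F' q s t) {a b : ℕ} (α : Fin b → X a) :
    T.components q (T.tupleOf s α) = α :=
  funext fun i => by rw [LawTheory.components, LawTheory.tupleOf_comp_proj, H.q_s]

theorem components_comp (H : IsSplitOnUnary F F' q s t) {a b c : ℕ} (x : T.Hom a b)
    (y : T.Hom b c) :
    T.components q (T.comp x y) =
      T.components q (T.comp (T.tupleOf s (T.components q x)) (T.tupleOf s (T.components q y))) :=
  funext fun j => by
    obtain ⟨x', hx, hx'⟩ := H.exists_lift x
    have := H.q_comp_eq x' (T.comp y (T.proj c j))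
    rw [hx, hx'] at this
    simp only [LawTheory.components, T.assoc, this, LawTheory.tupleOf_comp_proj]

theorem components_comp_congr (H : IsSplitOnUnary F F' q s t) {a b c : ℕ}
    {x x' : T.Hom a b} {y y' : T.Hom b c}
    (hx : T.components q x = T.components q x') (hy : T.components q y = T.components q y') :
    T.components q (T.comp x y) = T.components q (T.comp x' y') := by
  rw [H.components_comp x y, hx, hy, ← H.components_comp]

theorem q_eq_of_components_eq (H : IsSplitOnUnary F F' q s t) {a : ℕ} {x y : T.Hom a 1}
    (e : T.components q x = T.components q y) : q a x = q a y := by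
  -- `T.proj 1 0` need not be `T.id 1`, so `z` is written as `π₀ ∘ ⟨id⟩ ∘ z` instead
  have hq : ∀ z : T.Hom a 1,
      q a z = T.components q (T.comp z (T.tuple fun _ : Fin 1 => T.id 1)) 0 :=
    fun z => by rw [LawTheory.components, T.assoc, T.tuple_proj, T.comp_id]
  rw [hq x, hq y, H.components_comp_congr e rfl]

theorem components_eq_of_q_eq (H : IsSplitOnUnary F F' q s t) {a : ℕ} {x y : T.Hom a 1}
    (e : q a x = q a y) :
    T.components q x = T.components q y := by
  have hq : ∀ (z : T.Hom a 1) (i : Fin 1),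
      q a (T.comp z (T.proj 1 i)) = q a (T.comp (s a (q a z)) (s 1 (q 1 (T.proj 1 i)))) :=
    fun z i => by simpa only [H.map_t, H.map'_t] using H.q_comp_eq (t a z) (T.proj 1 i)
  exact funext fun i => by simp only [LawTheory.components, hq, e]

theorem q_tupleOf_components (H : IsSplitOnUnary F F' q s t) {n : ℕ} (y : T.Hom n 1) :
    q n (T.tupleOf s (T.components q y)) = q n y :=
  H.q_eq_of_components_eq (H.components_tupleOf _)


def coequalizer (H : IsSplitOnUnary F F' q s t) : LawTheory where
  Hom a b := Fin b → X a
  id n := T.components q (T.id n)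
  comp f g := T.components q (T.comp (T.tupleOf s f) (T.tupleOf s g))
  proj n i := T.components q (T.proj n i)
  tuple fs i := q _ (T.tupleOf s (fs i))
  id_comp f := by
    rw [H.components_comp_congr (H.components_tupleOf _) rfl, T.id_comp, H.components_tupleOf]
  comp_id f := by
    rw [H.components_comp_congr rfl (H.components_tupleOf _), T.comp_id, H.components_tupleOf]
  assoc f g k := by
    rw [H.components_comp_congr (H.components_tupleOf _) rfl,
      H.components_comp_congr rfl (H.components_tupleOf _), T.assoc]
  tuple_proj fs i := by
    rw [H.components_comp_congr ((H.components_tupleOf _).trans (T.components_tuple q _).symm)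
      (H.components_tupleOf _), T.tuple_proj, H.components_tupleOf]
  tuple_eta g := funext fun i => by
    beta_reduce
    rw [H.components_comp_congr rfl (H.components_tupleOf _), LawTheory.tupleOf_comp_proj,
      H.q_tupleOf_components, H.q_s]

def π (H : IsSplitOnUnary F F' q s t) : LawHom T H.coequalizer where
  map := T.components q
  map_id _ := rfl
  map_comp := H.components_comp
  map_proj _ _ := rfl

theorem π_map_map_eq (H : IsSplitOnUnary F F' q s t) {a b : ℕ} (x : T'.Hom a b) :
    H.π.map (F.map x) = H.π.map (F'.map x) :=
  funext fun i => by
    have := H.condition a (T'.comp x (T'.proj b i))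
    rwa [F.map_comp, F'.map_comp, F.map_proj, F'.map_proj] at this

theorem π_surjective (H : IsSplitOnUnary F F' q s t) (a b : ℕ) :
    Function.Surjective (@LawHom.map _ _ H.π a b) :=
  fun α => ⟨T.tupleOf s α, H.components_tupleOf α⟩

section Desc

variable {T₂ : LawTheory} (p : LawHom T T₂)

theorem map_eq_map_tupleOf_components (H : IsSplitOnUnary F F' q s t)
    (hp : ∀ (a b : ℕ) (x : T'.Hom a b), p.map (F.map x) = p.map (F'.map x)) {a b : ℕ}
    (x : T.Hom a b) : p.map x = p.map (T.tupleOf s (T.components q x)) := by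
  obtain ⟨x', hx, hx'⟩ := H.exists_lift x
  rw [← hx', ← hp, hx]

def desc (H : IsSplitOnUnary F F' q s t)
    (hp : ∀ (a b : ℕ) (x : T'.Hom a b), p.map (F.map x) = p.map (F'.map x)) :
    LawHom H.coequalizer T₂ where
  map α := p.map (T.tupleOf s α)
  map_id n := (H.map_eq_map_tupleOf_components p hp _).symm.trans (p.map_id n)
  map_comp _ _ := (H.map_eq_map_tupleOf_components p hp _).symm.trans (p.map_comp _ _)
  map_proj n i := (H.map_eq_map_tupleOf_components p hp _).symm.trans (p.map_proj n i)

theorem exists_unique_desc (H : IsSplitOnUnary F F' q s t)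
    (hp : ∀ (a b : ℕ) (x : T'.Hom a b), p.map (F.map x) = p.map (F'.map x)) :
    ∃! k : LawHom H.coequalizer T₂,
      ∀ (a b : ℕ) (y : T.Hom a b), k.map (H.π.map y) = p.map y := by
  refine ⟨H.desc p hp, fun a b y => (H.map_eq_map_tupleOf_components p hp y).symm,
    fun k hk => LawHom.ext k fun a b α => ?_⟩
  obtain ⟨y, rfl⟩ := H.π_surjective a b α
  rw [hk]
  exact H.map_eq_map_tupleOf_components p hp y

end Desc

theorem bijective_q_tupleOf (H : IsSplitOnUnary F F' q s t) (n : ℕ) :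
    Function.Bijective fun α : Fin 1 → X n => q n (T.tupleOf s α) := by
  refine ⟨fun α β e => ?_, fun y => ⟨T.components q (s n y), ?_⟩⟩
  · rw [← H.components_tupleOf α, ← H.components_tupleOf β]
    exact H.components_eq_of_q_eq e
  · exact (H.q_tupleOf_components _).trans (H.q_s n y)

end IsSplitOnUnary

theorem IsQOperadHom.of_comp_surjective {T T₀ : LawTheory} {O : SymOperad}
    {q : ∀ n : ℕ, T.Hom n 1 → O.ops n} (hq : IsQOperadHom T O q) (P : LawHom T T₀)
    (hP : ∀ n, Function.Surjective (@P.map n 1)) {j : ∀ n : ℕ, T₀.Hom n 1 → O.ops n}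
    (hj : ∀ n (y : T.Hom n 1), j n (P.map y) = q n y) : IsQOperadHom T₀ O j := by
  obtain ⟨hq_unit, hq_comp, hq_act⟩ := hq
  refine ⟨by rw [← P.map_id, hj, hq_unit], fun ns fs f => ?_, fun σ f => ?_⟩
  · choose gs hgs using fun i => hP _ (fs i)
    obtain ⟨g, rfl⟩ := hP _ f
    obtain rfl : (fun i => P.map (gs i)) = fs := funext hgs
    rw [← P.map_opComp, hj, hq_comp]
    simp only [hj]
  · obtain ⟨g, rfl⟩ := hP _ f
    rw [← P.map_opAct, hj, hq_act, hj]

/-- the functor `Q : LT → SOp` sending a Lawvere theory to its operad of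
operations is monadic: it has a left adjoint, it reflects isomorphisms, and `LT` has
and `Q` preserves coequalizers of `Q`-split pairs. -/
theorem Q_monadic :
    -- Q has a left adjoint (the span theory, with its universal property)
    (∀ O : SymOperad, ∃ (T : LawTheory) (η : ∀ n : ℕ, O.ops n → T.Hom n 1),
      IsOperadMapToQ O T η ∧
      ∀ (T' : LawTheory) (h : ∀ n : ℕ, O.ops n → T'.Hom n 1),
        IsOperadMapToQ O T' h →
        ∃! F : LawHom T T', ∀ (n : ℕ) (g : O.ops n), F.map (η n g) = h n g) ∧
    -- Q reflects isomorphisms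
    (∀ (T T' : LawTheory) (F : LawHom T T'),
      (∀ n : ℕ, Function.Bijective (fun f : T.Hom n 1 => F.map f)) →
      ∃ G : LawHom T' T,
        (∀ (a b : ℕ) (f : T.Hom a b), G.map (F.map f) = f) ∧
        (∀ (a b : ℕ) (g : T'.Hom a b), F.map (G.map g) = g)) ∧
    -- LT has and Q preserves coequalizers of Q-split pairs
    (∀ (T' T : LawTheory) (F F' : LawHom T' T) (O : SymOperad)
        (q : ∀ n : ℕ, T.Hom n 1 → O.ops n) (s : ∀ n : ℕ, O.ops n → T.Hom n 1)
        (t : ∀ n : ℕ, T.Hom n 1 → T'.Hom n 1),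
      IsQOperadHom T O q → IsOperadMapToQ O T s →
      (t 1 (T.id 1) = T'.id 1) →
      (∀ (k : ℕ) (ns : Fin k → ℕ) (fs : ∀ i, T.Hom (ns i) 1) (f : T.Hom k 1),
        t _ (T.opComp ns fs f) = T'.opComp ns (fun i => t _ (fs i)) (t k f)) →
      (∀ (n : ℕ) (σ : Equiv.Perm (Fin n)) (f : T.Hom n 1),
        t n (T.opAct σ f) = T'.opAct σ (t n f)) →
      -- split coequalizer equations in SOp
      (∀ (n : ℕ) (x : T'.Hom n 1), q n (F.map x) = q n (F'.map x)) →
      (∀ (n : ℕ) (y : O.ops n), q n (s n y) = y) →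
      (∀ (n : ℕ) (b : T.Hom n 1), F.map (t n b) = b) →
      (∀ (n : ℕ) (b : T.Hom n 1), F'.map (t n b) = s n (q n b)) →
      ∃ (T₀ : LawTheory) (qh : LawHom T T₀),
        -- qh coequalizes F and F' in LT
        (∀ (a b : ℕ) (x : T'.Hom a b), qh.map (F.map x) = qh.map (F'.map x)) ∧
        (∀ (T₂ : LawTheory) (p : LawHom T T₂),
          (∀ (a b : ℕ) (x : T'.Hom a b), p.map (F.map x) = p.map (F'.map x)) →
          ∃! k : LawHom T₀ T₂,
            ∀ (a b : ℕ) (y : T.Hom a b), k.map (qh.map y) = p.map y) ∧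
        -- Q sends qh to the given split coequalizer (up to isomorphism over q)
        ∃ j : ∀ n : ℕ, T₀.Hom n 1 → O.ops n,
          IsQOperadHom T₀ O j ∧ (∀ n : ℕ, Function.Bijective (j n)) ∧
          ∀ (n : ℕ) (y : T.Hom n 1), j n (qh.map y) = q n y) := by
  refine ⟨SymOperad.exists_universal_operadMapToQ, fun T T' F hF => ?_, ?_⟩
  · have hF' := F.bijective_map_of_bijective_unary hF
    exact ⟨F.inverse hF', fun _ _ => F.inverse_map_map hF', fun _ _ => F.map_inverse_map hF'⟩
  · intro T' T F F' O q s t hq _ _ _ _ condition q_s map_t map'_t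
    have H : IsSplitOnUnary F F' q s t := ⟨condition, q_s, map_t, map'_t⟩
    exact ⟨H.coequalizer, H.π, fun _ _ => H.π_map_map_eq,
      fun _ p hp => H.exists_unique_desc p hp, fun n α => q n (T.tupleOf s α),
      hq.of_comp_surjective H.π (H.π_surjective · 1) (fun _ => H.q_tupleOf_components),
      H.bijective_q_tupleOf, fun _ => H.q_tupleOf_components⟩
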